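/- Let W be a right infinite word on a finite alphabet and let A_W be the monomial algebra over a field k whose basis (together with 1) is the set of finite subwords of W, with multiplication given by concatenation when the concatenation is a subword of W and zero otherwise. Then A_W is a prime ring if and only if W is prime (every subword occurs infinitely often). -/

import Mathlib

/-- The factor (subword) of the right infinite word `W` starting at position `i`, of length `n`. -/
def FactorAt {X : Type*} (W : ℕ → X) (i n : ℕ) : List X :=
  (List.range n).map fun k => W (i + k)

/-- The finite word `u` occurs in `W` at position `i`. -/
def OccursAt {X : Type*} (W : ℕ → X) (u : List X) (i : ℕ) : Prop :=
  FactorAt W i u.length = u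

/-- `u` is a (finite) subword of the right infinite word `W`. -/
def IsFactor {X : Type*} (W : ℕ → X) (u : List X) : Prop :=
  ∃ i, OccursAt W u i

/-- A right infinite word is prime if every finite subword occurs infinitely often. -/
def IsPrimeWord {X : Type*} (W : ℕ → X) : Prop :=
  ∀ u, IsFactor W u → ∀ N, ∃ i, N ≤ i ∧ OccursAt W u i

/-- `W` is ultimately periodic. -/
def UltPeriodic {X : Type*} (W : ℕ → X) : Prop :=
  ∃ N p, 1 ≤ p ∧ ∀ i, N ≤ i → W (i + p) = W i

/-- `k`-fold concatenation power of a finite word. -/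
def wpow {X : Type*} (w : List X) (k : ℕ) : List X := (List.replicate k w).flatten

/-- The periodic right infinite word `w^ω`. -/
def perWord {X : Type*} [Inhabited X] (w : List X) : ℕ → X :=
  fun n => w.getD (n % w.length) default

/-- The right infinite word `w₁ w₂^ω`. -/
def glueWord {X : Type*} [Inhabited X] (w₁ w₂ : List X) : ℕ → X := fun n =>
  if n < w₁.length then w₁.getD n default
  else w₂.getD ((n - w₁.length) % w₂.length) default

/-- The right infinite word obtained by prefixing `U` with the finite word `w`. -/
def prependWord {X : Type*} (w : List X) (U : ℕ → X) : ℕ → X := fun n =>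
  if n < w.length then w.getD n (U 0) else U (n - w.length)

/-- The finite word `w` is a prefix of the right infinite word `U`. -/
def HasPrefixWord {X : Type*} (U : ℕ → X) (w : List X) : Prop :=
  FactorAt U 0 w.length = w


/-- The image of a finite word in the free algebra: the product of its letters. -/
noncomputable def wordToAlg (k : Type*) [CommRing k] {X : Type*} (w : List X) :
    FreeAlgebra k X :=
  (w.map (FreeAlgebra.ι k)).prod

/-- The relations defining the monomial algebra of a right infinite word `W`: every
finite word that is not a subword of `W` is set to zero. -/
def monomialRel (k : Type*) [CommRing k] {X : Type*} (W : ℕ → X) :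
    FreeAlgebra k X → FreeAlgebra k X → Prop :=
  fun a b => ∃ w : List X, ¬ IsFactor W w ∧ a = wordToAlg k w ∧ b = 0

/-- The monomial algebra `A_W` of a right infinite word `W`. -/
abbrev MonomialAlgebra (k : Type*) [CommRing k] {X : Type*} (W : ℕ → X) :=
  RingQuot (monomialRel k W)

/-!
The subwords of `W` form a basis of `A_W`; the coordinates of an element are read off from the
representation of `A_W` on `List X →₀ k` in which a word acts by left concatenation followed by
deleting every word that is not a subword of `W`.

If `p * r * u ≠ 0` in `A_W`, some word `p s u` is a subword of `W`; taking for `p` the prefix of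
length `N` of `W` shows that `u` occurs beyond position `N`. Conversely, if `W` is prime, any
subword `u` is followed, after some gap `m`, by an occurrence of any subword `v`. Taking `u` and
`v` of maximal length in the supports of `a` and `b`, the coefficient of `u m v` in `a * m * b`
is the product of their (nonzero) coefficients, since lengths force every other contribution
`u' m v'` to be a different word.
-/

open Finsupp

section Words

variable {X : Type*} (W : ℕ → X)

@[simp]
theorem factorAt_length (i n : ℕ) : (FactorAt W i n).length = n := by
  simp [FactorAt]

theorem factorAt_add (i m n : ℕ) :
    FactorAt W i (m + n) = FactorAt W i m ++ FactorAt W (i + m) n := by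
  simp [FactorAt, List.range_add, Nat.add_assoc]

theorem occursAt_factorAt (i n : ℕ) : OccursAt W (FactorAt W i n) i := by
  rw [OccursAt, factorAt_length]

theorem isFactor_nil : IsFactor W [] := ⟨0, rfl⟩

variable {W}

theorem occursAt_append_iff {u v : List X} {i : ℕ} :
    OccursAt W (u ++ v) i ↔ OccursAt W u i ∧ OccursAt W v (i + u.length) := by
  rw [OccursAt, OccursAt, OccursAt, List.length_append, factorAt_add]
  constructor
  · intro h
    exact List.append_inj h (factorAt_length ..)
  · rintro ⟨hu, hv⟩
    rw [hu, hv]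

theorem IsFactor.of_append_left {u v : List X} (h : IsFactor W (u ++ v)) : IsFactor W u :=
  h.imp fun _ hi => (occursAt_append_iff.1 hi).1

theorem IsFactor.of_append_right {u v : List X} (h : IsFactor W (u ++ v)) : IsFactor W v :=
  let ⟨_, hi⟩ := h
  ⟨_, (occursAt_append_iff.1 hi).2⟩

theorem isPrimeWord_iff_exists_append_isFactor :
    IsPrimeWord W ↔ ∀ p u, IsFactor W p → IsFactor W u → ∃ s, IsFactor W (p ++ s ++ u) := by
  constructor
  · rintro hW p u ⟨i, hp⟩ hu
    obtain ⟨j, hj, hu⟩ := hW u hu (i + p.length)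
    refine ⟨FactorAt W (i + p.length) (j - (i + p.length)), i, ?_⟩
    rw [occursAt_append_iff, occursAt_append_iff, List.length_append, factorAt_length]
    refine ⟨⟨hp, occursAt_factorAt ..⟩, ?_⟩
    rwa [show i + (p.length + (j - (i + p.length))) = j by omega]
  · intro hW u hu N
    obtain ⟨s, _, h⟩ := hW _ u ⟨0, occursAt_factorAt W 0 N⟩ hu
    refine ⟨_, ?_, (occursAt_append_iff.1 h).2⟩
    simp only [List.length_append, factorAt_length]
    omega

end Words

theorem List.append_append_eq_iff_of_length_le {α : Type*} {u u' m v v' : List α}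
    (hu : u'.length ≤ u.length) (hv : v'.length ≤ v.length) :
    u' ++ m ++ v' = u ++ m ++ v ↔ u' = u ∧ v' = v := by
  refine ⟨fun h => ?_, by rintro ⟨rfl, rfl⟩; rfl⟩
  have hlen := congrArg List.length h
  simp only [List.length_append] at hlen
  obtain ⟨hum, rfl⟩ := List.append_inj' h (by omega)
  exact ⟨List.append_inj_left hum (by omega), rfl⟩

section TruncatedMultiplication

variable {X : Type*} (W : ℕ → X) (k : Type*) [CommRing k]

noncomputable def truncSingle (w : List X) : List X →₀ k :=
  open Classical in if IsFactor W w then single w 1 else 0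

variable {W k}

theorem truncSingle_of_isFactor {w : List X} (h : IsFactor W w) :
    truncSingle W k w = single w 1 :=
  if_pos h

theorem truncSingle_of_not_isFactor {w : List X} (h : ¬ IsFactor W w) :
    truncSingle W k w = 0 :=
  if_neg h

theorem truncSingle_apply_of_isFactor [DecidableEq X] (u : List X) {w : List X}
    (hw : IsFactor W w) : truncSingle W k u w = if u = w then 1 else 0 := by
  by_cases hu : IsFactor W u
  · rw [truncSingle_of_isFactor hu, single_apply]
  · rw [truncSingle_of_not_isFactor hu, if_neg (by rintro rfl; exact hu hw), Finsupp.zero_apply]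

variable (W k)

noncomputable def truncMul (u : List X) : Module.End k (List X →₀ k) :=
  lsum k fun w => LinearMap.toSpanSingleton k _ (truncSingle W k (u ++ w))

variable {W k}

theorem truncMul_single (u w : List X) (c : k) :
    truncMul W k u (single w c) = c • truncSingle W k (u ++ w) := by
  simp [truncMul, LinearMap.toSpanSingleton_apply]

theorem truncMul_truncSingle (u w : List X) :
    truncMul W k u (truncSingle W k w) = truncSingle W k (u ++ w) := by
  by_cases h : IsFactor W w
  · rw [truncSingle_of_isFactor h, truncMul_single, one_smul]
  · rw [truncSingle_of_not_isFactor h, map_zero,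
      truncSingle_of_not_isFactor fun h' => h h'.of_append_right]

theorem truncMul_mul_truncMul (u v : List X) :
    truncMul W k u * truncMul W k v = truncMul W k (u ++ v) := by
  refine lhom_ext fun w c => ?_
  rw [Module.End.mul_apply, truncMul_single, map_smul, truncMul_truncSingle, truncMul_single,
    List.append_assoc]

theorem truncMul_of_not_isFactor {u : List X} (h : ¬ IsFactor W u) : truncMul W k u = 0 := by
  refine lhom_ext fun w c => ?_
  rw [truncMul_single, truncSingle_of_not_isFactor fun h' => h h'.of_append_left, smul_zero,
    LinearMap.zero_apply]

variable (W k)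

noncomputable def truncRep : FreeAlgebra k X →ₐ[k] Module.End k (List X →₀ k) :=
  FreeAlgebra.lift k fun x => truncMul W k [x]

variable {W k}

theorem wordToAlg_append (u v : List X) :
    wordToAlg k (u ++ v) = wordToAlg k u * wordToAlg k v := by
  simp [wordToAlg]

theorem truncRep_wordToAlg {u : List X} (h : u ≠ []) :
    truncRep W k (wordToAlg k u) = truncMul W k u := by
  induction u with
  | nil => exact absurd rfl h
  | cons x t ih =>
    rw [← List.singleton_append, wordToAlg_append, map_mul]
    have hx : truncRep W k (wordToAlg k [x]) = truncMul W k [x] := by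
      simp [wordToAlg, truncRep]
    rcases eq_or_ne t [] with rfl | ht
    · rw [hx, wordToAlg, List.map_nil, List.prod_nil, map_one, mul_one, List.append_nil]
    · rw [hx, ih ht, truncMul_mul_truncMul]

theorem truncRep_eq_of_monomialRel {a b : FreeAlgebra k X} (h : monomialRel k W a b) :
    truncRep W k a = truncRep W k b := by
  obtain ⟨w, hw, rfl, rfl⟩ := h
  rw [truncRep_wordToAlg (by rintro rfl; exact hw (isFactor_nil W)), truncMul_of_not_isFactor hw,
    map_zero]

end TruncatedMultiplication

namespace MonomialAlgebra

variable {X : Type*} (W : ℕ → X) (k : Type*) [CommRing k]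

noncomputable def rep : MonomialAlgebra k W →ₐ[k] Module.End k (List X →₀ k) :=
  RingQuot.liftAlgHom k ⟨truncRep W k, fun _ _ => truncRep_eq_of_monomialRel⟩

noncomputable def word (u : List X) : MonomialAlgebra k W :=
  RingQuot.mkAlgHom k (monomialRel k W) (wordToAlg k u)

/-- The coordinates of an element of `A_W` in the basis of subwords of `W`, read off from its
action on the empty word. -/
noncomputable def coeffs : MonomialAlgebra k W →ₗ[k] List X →₀ k :=
  (LinearMap.applyₗ (single [] 1)).comp (rep W k).toLinearMap

variable {W k}

theorem word_nil : word W k [] = 1 := map_one _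

theorem word_mul_word (u v : List X) : word W k u * word W k v = word W k (u ++ v) := by
  rw [word, word, word, ← map_mul, wordToAlg_append]

theorem word_eq_zero {u : List X} (h : ¬ IsFactor W u) : word W k u = 0 := by
  rw [word, RingQuot.mkAlgHom_rel k ⟨u, h, rfl, rfl⟩, map_zero]

theorem rep_word {u : List X} (h : u ≠ []) : rep W k (word W k u) = truncMul W k u := by
  rw [rep, word, RingQuot.liftAlgHom_mkAlgHom_apply]
  exact truncRep_wordToAlg h

theorem coeffs_word (u : List X) : coeffs W k (word W k u) = truncSingle W k u := by
  rcases eq_or_ne u [] with rfl | h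
  · rw [coeffs, LinearMap.comp_apply, word_nil, AlgHom.toLinearMap_apply, map_one,
      truncSingle_of_isFactor (isFactor_nil W)]
    rfl
  · rw [coeffs, LinearMap.comp_apply, AlgHom.toLinearMap_apply, rep_word h,
      LinearMap.applyₗ_apply_apply, truncMul_single, one_smul, List.append_nil]

theorem span_range_word : Submodule.span k (Set.range (word W k)) = ⊤ := by
  set S := Submodule.span k (Set.range (word W k))
  have hmul : S * S ≤ S := by
    rw [Submodule.span_mul_span, Submodule.span_le]
    rintro _ ⟨_, ⟨u, rfl⟩, _, ⟨v, rfl⟩, rfl⟩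
    exact Submodule.subset_span ⟨u ++ v, (word_mul_word u v).symm⟩
  rw [eq_top_iff]
  rintro a -
  obtain ⟨y, rfl⟩ := RingQuot.mkAlgHom_surjective k (monomialRel k W) a
  induction y using FreeAlgebra.induction with
  | grade0 r =>
    rw [AlgHom.commutes, Algebra.algebraMap_eq_smul_one, ← word_nil]
    exact S.smul_mem r (Submodule.subset_span ⟨[], rfl⟩)
  | grade1 x => exact Submodule.subset_span ⟨[x], by simp [word, wordToAlg]⟩
  | mul a b ha hb => rw [map_mul]; exact hmul (Submodule.mul_mem_mul ha hb)
  | add a b ha hb => rw [map_add]; exact S.add_mem ha hb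

theorem linearCombination_comp_coeffs :
    (linearCombination k (word W k)).comp (coeffs W k) = LinearMap.id := by
  refine LinearMap.ext_on_range span_range_word fun u => ?_
  rw [LinearMap.comp_apply, coeffs_word, LinearMap.id_apply]
  by_cases h : IsFactor W u
  · rw [truncSingle_of_isFactor h, linearCombination_single, one_smul]
  · rw [truncSingle_of_not_isFactor h, map_zero, word_eq_zero h]

theorem sum_coeffs_smul_word (a : MonomialAlgebra k W) :
    (coeffs W k a).sum (fun u c => c • word W k u) = a := by
  rw [← linearCombination_apply]
  exact LinearMap.congr_fun linearCombination_comp_coeffs a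

theorem coeffs_injective : Function.Injective (coeffs W k) :=
  Function.LeftInverse.injective (g := linearCombination k (word W k))
    (LinearMap.congr_fun linearCombination_comp_coeffs)

theorem coeffs_mem_supported (a : MonomialAlgebra k W) :
    coeffs W k a ∈ supported k k {w | IsFactor W w} := by
  have hrange : Submodule.map (coeffs W k) ⊤ ≤ supported k k {w | IsFactor W w} := by
    rw [← span_range_word, Submodule.map_span, Submodule.span_le]
    rintro _ ⟨_, ⟨u, rfl⟩, rfl⟩
    rw [SetLike.mem_coe, coeffs_word]
    by_cases h : IsFactor W u
    · rw [truncSingle_of_isFactor h]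
      exact single_mem_supported k 1 h
    · rw [truncSingle_of_not_isFactor h]
      exact zero_mem _
  exact hrange ⟨a, trivial, rfl⟩

theorem isFactor_of_mem_support_coeffs {a : MonomialAlgebra k W} {w : List X}
    (h : w ∈ (coeffs W k a).support) : IsFactor W w :=
  coeffs_mem_supported a h

theorem word_ne_zero [Nontrivial k] {u : List X} (h : IsFactor W u) : word W k u ≠ 0 := by
  intro h0
  have hcoeffs := coeffs_word (W := W) (k := k) u
  rw [h0, map_zero, truncSingle_of_isFactor h] at hcoeffs
  exact one_ne_zero (single_eq_zero.1 hcoeffs.symm)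

theorem exists_isFactor_of_word_mul_mul_word_ne_zero {p u : List X} {r : MonomialAlgebra k W}
    (h : word W k p * r * word W k u ≠ 0) : ∃ s, IsFactor W (p ++ s ++ u) := by
  by_contra! hs
  apply h
  rw [← sum_coeffs_smul_word r, Finsupp.sum, Finset.mul_sum, Finset.sum_mul]
  refine Finset.sum_eq_zero fun s _ => ?_
  rw [mul_smul_comm, smul_mul_assoc, word_mul_word, word_mul_word, word_eq_zero (hs s), smul_zero]

theorem mul_word_mul_eq_sum (a b : MonomialAlgebra k W) (m : List X) :
    a * word W k m * b = (coeffs W k a).sum fun u x => (coeffs W k b).sum fun v y =>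
      (x * y) • word W k (u ++ m ++ v) := by
  conv_lhs => rw [← sum_coeffs_smul_word a, ← sum_coeffs_smul_word b]
  rw [Finsupp.sum, Finset.sum_mul, Finset.sum_mul]
  refine Finset.sum_congr rfl fun u _ => ?_
  rw [Finsupp.sum, Finset.mul_sum]
  refine Finset.sum_congr rfl fun v _ => ?_
  rw [smul_mul_assoc, smul_mul_assoc, mul_smul_comm, smul_smul, word_mul_word, word_mul_word]

theorem coeffs_mul_word_mul_apply [DecidableEq X] {a b : MonomialAlgebra k W} {u m v : List X}
    (hu : u ∈ (coeffs W k a).support) (hv : v ∈ (coeffs W k b).support)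
    (hu_max : ∀ u' ∈ (coeffs W k a).support, u'.length ≤ u.length)
    (hv_max : ∀ v' ∈ (coeffs W k b).support, v'.length ≤ v.length)
    (hw : IsFactor W (u ++ m ++ v)) :
    coeffs W k (a * word W k m * b) (u ++ m ++ v) = coeffs W k a u * coeffs W k b v := by
  calc coeffs W k (a * word W k m * b) (u ++ m ++ v)
      = (coeffs W k a).sum fun u' x => (coeffs W k b).sum fun v' y =>
          x * y * if u' ++ m ++ v' = u ++ m ++ v then 1 else 0 := by
        simp only [mul_word_mul_eq_sum, Finsupp.sum, map_sum, map_smul, Finsupp.finsetSum_apply,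
          Finsupp.smul_apply, coeffs_word, truncSingle_apply_of_isFactor _ hw, smul_eq_mul]
    _ = (coeffs W k a).sum fun u' x => (coeffs W k b).sum fun v' y =>
          if u' = u ∧ v' = v then x * y else 0 := by
        refine Finset.sum_congr rfl fun u' hu' => Finset.sum_congr rfl fun v' hv' => ?_
        dsimp only
        rw [mul_ite, mul_one, mul_zero]
        exact if_congr (List.append_append_eq_iff_of_length_le (hu_max u' hu') (hv_max v' hv'))
          rfl rfl
    _ = coeffs W k a u * coeffs W k b v := by
        simp [Finsupp.sum, ite_and, hu, hv]

theorem exists_mul_word_mul_ne_zero [NoZeroDivisors k]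
    (hW : ∀ p u, IsFactor W p → IsFactor W u → ∃ s, IsFactor W (p ++ s ++ u))
    {a b : MonomialAlgebra k W} (ha : a ≠ 0) (hb : b ≠ 0) : ∃ m, a * word W k m * b ≠ 0 := by
  classical
  have hA : (coeffs W k a).support.Nonempty :=
    support_nonempty_iff.2 ((map_ne_zero_iff _ coeffs_injective).2 ha)
  have hB : (coeffs W k b).support.Nonempty :=
    support_nonempty_iff.2 ((map_ne_zero_iff _ coeffs_injective).2 hb)
  obtain ⟨u, hu, hu_max⟩ := (coeffs W k a).support.exists_max_image List.length hA
  obtain ⟨v, hv, hv_max⟩ := (coeffs W k b).support.exists_max_image List.length hB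
  obtain ⟨m, hm⟩ := hW u v (isFactor_of_mem_support_coeffs hu) (isFactor_of_mem_support_coeffs hv)
  refine ⟨m, fun h0 => ?_⟩
  have hcoeff := coeffs_mul_word_mul_apply hu hv hu_max hv_max hm
  rw [h0, map_zero, Finsupp.zero_apply] at hcoeff
  exact mul_ne_zero (mem_support_iff.1 hu) (mem_support_iff.1 hv) hcoeff.symm

end MonomialAlgebra

theorem monomialAlgebra_prime_iff_general {k : Type*} [Field k] {X : Type*}
    (W : ℕ → X) :
    (∀ a b : MonomialAlgebra k W, a ≠ 0 → b ≠ 0 → ∃ r : MonomialAlgebra k W,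
        a * r * b ≠ 0) ↔ IsPrimeWord W := by
  rw [isPrimeWord_iff_exists_append_isFactor]
  constructor
  · intro H p u hp hu
    obtain ⟨r, hr⟩ := H _ _ (MonomialAlgebra.word_ne_zero (k := k) hp)
      (MonomialAlgebra.word_ne_zero hu)
    exact MonomialAlgebra.exists_isFactor_of_word_mul_mul_word_ne_zero hr
  · intro H a b ha hb
    obtain ⟨m, hm⟩ := MonomialAlgebra.exists_mul_word_mul_ne_zero H ha hb
    exact ⟨_, hm⟩

/-- The monomial algebra `A_W` of a right infinite word `W` over a finite alphabet is a
prime ring if and only if `W` is prime (every subword of `W` occurs infinitely often). -/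
theorem monomialAlgebra_prime_iff {k : Type*} [Field k] {X : Type*} [Fintype X]
    (W : ℕ → X) :
    (∀ a b : MonomialAlgebra k W, a ≠ 0 → b ≠ 0 → ∃ r : MonomialAlgebra k W,
        a * r * b ≠ 0) ↔ IsPrimeWord W :=
  monomialAlgebra_prime_iff_general W
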